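/- arXiv:2005.07183 — 2 statements merged into one kernel-verified Lean document; each statement's English description precedes it below -/
import Mathlib

section
/- Pivotal morphisms are closed under composition: if f: (P₁,Q₁) → (P₂,Q₂) and g: (P₂,Q₂) → (P₃,Q₃) are pivotal morphisms between pivotal pairs, then g∘f: (P₁,Q₁) → (P₃,Q₃) is pivotal. Hence the pivotal cover C^piv, with pivotal pairs as objects and pivotal morphisms as morphisms, is a well-defined category. -/
open CategoryTheory MonoidalCategory

universe v u

variable {C : Type u} [Category.{v} C] [MonoidalCategory C]

/-- A pivotal pair `(P, Q)` in a monoidal category. -/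
structure PivotalPair (P Q : C) where
  coev : 𝟙_ C ⟶ P ⊗ Q
  ev : Q ⊗ P ⟶ 𝟙_ C
  coev' : 𝟙_ C ⟶ Q ⊗ P
  ev' : P ⊗ Q ⟶ 𝟙_ C
  coev_ev : Q ◁ coev ≫ (α_ Q P Q).inv ≫ ev ▷ Q = (ρ_ Q).hom ≫ (λ_ Q).inv
  ev_coev : coev ▷ P ≫ (α_ P Q P).hom ≫ P ◁ ev = (λ_ P).hom ≫ (ρ_ P).inv
  coev_ev' : P ◁ coev' ≫ (α_ P Q P).inv ≫ ev' ▷ P = (ρ_ P).hom ≫ (λ_ P).inv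
  ev_coev' : coev' ▷ Q ≫ (α_ Q P Q).hom ≫ Q ◁ ev' = (λ_ Q).hom ≫ (ρ_ Q).inv

/-- The "left dual" `(ev₂ ⊗ Q₁)(Q₂ ⊗ f ⊗ Q₁)(Q₂ ⊗ coev₁) : Q₂ ⟶ Q₁` of `f : P₁ ⟶ P₂`. -/
def leftDualMap {P₁ Q₁ P₂ Q₂ : C} (h₁ : PivotalPair P₁ Q₁) (h₂ : PivotalPair P₂ Q₂)
    (f : P₁ ⟶ P₂) : Q₂ ⟶ Q₁ :=
  (ρ_ Q₂).inv ≫ Q₂ ◁ h₁.coev ≫ Q₂ ◁ (f ▷ Q₁) ≫ (α_ Q₂ P₂ Q₁).inv ≫ h₂.ev ▷ Q₁ ≫ (λ_ Q₁).hom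

/-- The "right dual" `(Q₁ ⊗ ev'₂)(Q₁ ⊗ f ⊗ Q₂)(coev'₁ ⊗ Q₂) : Q₂ ⟶ Q₁` of `f : P₁ ⟶ P₂`. -/
def rightDualMap {P₁ Q₁ P₂ Q₂ : C} (h₁ : PivotalPair P₁ Q₁) (h₂ : PivotalPair P₂ Q₂)
    (f : P₁ ⟶ P₂) : Q₂ ⟶ Q₁ :=
  (λ_ Q₂).inv ≫ h₁.coev' ▷ Q₂ ≫ (Q₁ ◁ f) ▷ Q₂ ≫ (α_ Q₁ P₂ Q₂).hom ≫ Q₁ ◁ h₂.ev' ≫ (ρ_ Q₁).hom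

/-- `f : P₁ ⟶ P₂` is a pivotal morphism `(P₁,Q₁) → (P₂,Q₂)` if its left and right duals
agree as morphisms `Q₂ ⟶ Q₁`. -/
def IsPivotalHom {P₁ Q₁ P₂ Q₂ : C} (h₁ : PivotalPair P₁ Q₁) (h₂ : PivotalPair P₂ Q₂)
    (f : P₁ ⟶ P₂) : Prop :=
  leftDualMap h₁ h₂ f = rightDualMap h₁ h₂ f

/-!
The left dual of `f` is its right adjoint mate for the exact pairing `(coev, ev)`, and the right
dual its left adjoint mate for `(coev', ev')`. Taking mates is contravariantly functorial, so both
duals send identities to identities and `f ≫ g` to the reversed composite of the duals; hence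
agreement of the two duals is preserved.
-/

namespace PivotalPair

variable {P Q : C}

abbrev toHasRightDual (h : PivotalPair P Q) : HasRightDual P :=
  letI : ExactPairing P Q := ⟨h.coev, h.ev, h.coev_ev, h.ev_coev⟩
  ⟨Q⟩

abbrev toHasLeftDual (h : PivotalPair P Q) : HasLeftDual P :=
  letI : ExactPairing Q P := ⟨h.coev', h.ev', h.coev_ev', h.ev_coev'⟩
  ⟨Q⟩

end PivotalPair

section

variable {P₁ Q₁ P₂ Q₂ P₃ Q₃ : C}

lemma leftDualMap_id (h : PivotalPair P₁ Q₁) : leftDualMap h h (𝟙 P₁) = 𝟙 Q₁ :=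
  letI := h.toHasRightDual
  rightAdjointMate_id (X := P₁)

lemma rightDualMap_id (h : PivotalPair P₁ Q₁) : rightDualMap h h (𝟙 P₁) = 𝟙 Q₁ :=
  letI := h.toHasLeftDual
  leftAdjointMate_id (X := P₁)

lemma leftDualMap_comp (h₁ : PivotalPair P₁ Q₁) (h₂ : PivotalPair P₂ Q₂)
    (h₃ : PivotalPair P₃ Q₃) (f : P₁ ⟶ P₂) (g : P₂ ⟶ P₃) :
    leftDualMap h₁ h₃ (f ≫ g) = leftDualMap h₂ h₃ g ≫ leftDualMap h₁ h₂ f :=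
  letI := h₁.toHasRightDual; letI := h₂.toHasRightDual; letI := h₃.toHasRightDual
  comp_rightAdjointMate (f := f) (g := g)

lemma rightDualMap_comp (h₁ : PivotalPair P₁ Q₁) (h₂ : PivotalPair P₂ Q₂)
    (h₃ : PivotalPair P₃ Q₃) (f : P₁ ⟶ P₂) (g : P₂ ⟶ P₃) :
    rightDualMap h₁ h₃ (f ≫ g) = rightDualMap h₂ h₃ g ≫ rightDualMap h₁ h₂ f :=
  letI := h₁.toHasLeftDual; letI := h₂.toHasLeftDual; letI := h₃.toHasLeftDual
  comp_leftAdjointMate (f := f) (g := g)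

theorem isPivotalHom_id (h : PivotalPair P₁ Q₁) : IsPivotalHom h h (𝟙 P₁) :=
  (leftDualMap_id h).trans (rightDualMap_id h).symm

theorem IsPivotalHom.comp {h₁ : PivotalPair P₁ Q₁} {h₂ : PivotalPair P₂ Q₂}
    {h₃ : PivotalPair P₃ Q₃} {f : P₁ ⟶ P₂} {g : P₂ ⟶ P₃} (hf : IsPivotalHom h₁ h₂ f)
    (hg : IsPivotalHom h₂ h₃ g) : IsPivotalHom h₁ h₃ (f ≫ g) := by
  rw [IsPivotalHom, leftDualMap_comp, rightDualMap_comp, hf, hg]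

end

/-- Pivotal morphisms contain identities and are closed under composition; hence the pivotal
cover `C^piv`, with pivotal pairs as objects and pivotal morphisms as morphisms, is a
well-defined category. -/
theorem isPivotalHom_id_and_comp :
    (∀ (P Q : C) (h : PivotalPair P Q), IsPivotalHom h h (𝟙 P)) ∧
    (∀ (P₁ Q₁ P₂ Q₂ P₃ Q₃ : C) (h₁ : PivotalPair P₁ Q₁) (h₂ : PivotalPair P₂ Q₂)
      (h₃ : PivotalPair P₃ Q₃) (f : P₁ ⟶ P₂) (g : P₂ ⟶ P₃),
      IsPivotalHom h₁ h₂ f → IsPivotalHom h₂ h₃ g → IsPivotalHom h₁ h₃ (f ≫ g)) := by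
  exact ⟨fun _ _ h => isPivotalHom_id h, fun _ _ _ _ _ _ _ _ _ _ _ hf hg => hf.comp hg⟩
end

section
/- Let Q ∈ GL(n,k) be an invertible matrix with inverse entries p_{ij} and entries q_{ij}. Then the quotient of the free algebra k⟨fᵢⱼ, eᵢⱼ : 1 ≤ i,j ≤ n⟩ by the relations Σⱼ fⱼₖeⱼᵢ = Σⱼ fᵢⱼeₖⱼ = pᵢₖ and Σ_{j,l} eⱼᵢf_{lk}q_{jl} = Σ_{j,l} eᵢⱼf_{kl}q_{lj} = δᵢₖ is a Hopf algebra with coproduct Δ(eᵢₖ) = Σⱼ eᵢⱼ⊗eⱼₖ, Δ(fᵢₖ) = Σ_{j,l} fᵢⱼ⊗f_{lk}q_{jl}, counit ε(eᵢₖ) = δᵢₖ, ε(fᵢₖ) = pᵢₖ, and antipode S(eᵢₖ) = Σ_l f_{kl}q_{li}, S(fᵢₖ) = Σ_l eₖₗp_{il}. -/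
/-!
Write `E = (eᵢⱼ)`, `F = (fᵢⱼ)` and `P`, `Q` for `p`, `q` viewed as scalar matrices. The relations
say `Fᵀ E = Pᵀ`, `F Eᵀ = P`, `Eᵀ Q F = 1`, `E Qᵀ Fᵀ = 1`, so `E` and `Eᵀ` are invertible with
inverses `Qᵀ Fᵀ` and `G = Q F`. Algebra maps out of the quotient are pairs of matrices satisfying
these relations, and such pairs can be multiplied (`(F₁ Q F₂, E₁ E₂)` when the entries of the two
pairs commute), have a unit `(p, 1)` and a dual `(P Eᵀ, Qᵀ Fᵀ)` in the opposite algebra: this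
gives `Δ`, `ε` and `S`. The entries of `E` and `G` generate the algebra, both matrices are
multiplicative (`Δ Xᵢₖ = Σⱼ Xᵢⱼ ⊗ Xⱼₖ`, `ε X = 1`), and `S` maps each of them to its inverse.
This gives the coalgebra and antipode axioms on generators, and they propagate to the whole
algebra because `Δ`, `ε` are multiplicative and `S` is anti-multiplicative.
-/

open scoped TensorProduct

noncomputable section

variable (k : Type) [Field k] (n : ℕ)

/-- Generators `fᵢⱼ` (inl) and `eᵢⱼ` (inr), `1 ≤ i,j ≤ n`. -/
abbrev PivGen (n : ℕ) := (Fin n × Fin n) ⊕ (Fin n × Fin n)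

/-- The generator `fᵢⱼ` in the free algebra. -/
def fg (i j : Fin n) : FreeAlgebra k (PivGen n) := FreeAlgebra.ι k (Sum.inl (i, j))

/-- The generator `eᵢⱼ` in the free algebra. -/
def eg (i j : Fin n) : FreeAlgebra k (PivGen n) := FreeAlgebra.ι k (Sum.inr (i, j))

/-- The relations `Σⱼ fⱼₖeⱼᵢ = Σⱼ fᵢⱼeₖⱼ = pᵢₖ` and
`Σ_{j,l} eⱼᵢf_{lk}q_{jl} = Σ_{j,l} eᵢⱼf_{kl}q_{lj} = δᵢₖ` associated to an invertible matrix
`q` with inverse `p`. -/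
inductive MatrixRel (q p : Matrix (Fin n) (Fin n) k) :
    FreeAlgebra k (PivGen n) → FreeAlgebra k (PivGen n) → Prop
  | left_pair (i c : Fin n) :
      MatrixRel q p (∑ j, fg k n j c * eg k n j i) (algebraMap k _ (p i c))
  | right_pair (i c : Fin n) :
      MatrixRel q p (∑ j, fg k n i j * eg k n c j) (algebraMap k _ (p i c))
  | left_copair (i c : Fin n) :
      MatrixRel q p (∑ j, ∑ l, q j l • (eg k n j i * fg k n l c))
        (if i = c then 1 else 0)
  | right_copair (i c : Fin n) :
      MatrixRel q p (∑ j, ∑ l, q l j • (eg k n i j * fg k n c l))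
        (if i = c then 1 else 0)

/-- The algebra associated to an invertible `n × n` matrix `q` (Example 5.10): the quotient
of the free algebra `k⟨fᵢⱼ, eᵢⱼ⟩` by the relations above. -/
def MatrixHopf (q p : Matrix (Fin n) (Fin n) k) : Type :=
  RingQuot (MatrixRel k n q p)

instance (q p : Matrix (Fin n) (Fin n) k) : Ring (MatrixHopf k n q p) :=
  inferInstanceAs (Ring (RingQuot (MatrixRel k n q p)))

instance (q p : Matrix (Fin n) (Fin n) k) : Algebra k (MatrixHopf k n q p) :=
  inferInstanceAs (Algebra k (RingQuot (MatrixRel k n q p)))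

/-- The images of the generators `fᵢⱼ` in the quotient. -/
def F' (q p : Matrix (Fin n) (Fin n) k) (i j : Fin n) : MatrixHopf k n q p :=
  RingQuot.mkAlgHom k (MatrixRel k n q p) (fg k n i j)

/-- The images of the generators `eᵢⱼ` in the quotient. -/
def E' (q p : Matrix (Fin n) (Fin n) k) (i j : Fin n) : MatrixHopf k n q p :=
  RingQuot.mkAlgHom k (MatrixRel k n q p) (eg k n i j)

open scoped Matrix

namespace Matrix

theorem transpose_mul_of_commute {m α : Type*} [Fintype m] [NonUnitalNonAssocSemiring α]
    (M N : Matrix m m α) (h : ∀ i j k l, Commute (M i j) (N k l)) : (M * N)ᵀ = Nᵀ * Mᵀ := by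
  ext i j
  simp only [transpose_apply, mul_apply]
  exact Finset.sum_congr rfl fun l _ => (h _ _ _ _).eq

section AlgebraMap

open MulOpposite TensorProduct

variable {m R A B : Type*} [CommSemiring R] [Semiring A] [Algebra R A] [Semiring B] [Algebra R B]

theorem map_algebraMap_map (q : Matrix m m R) (φ : A →ₐ[R] B) :
    (q.map (algebraMap R A)).map φ = q.map (algebraMap R B) := by
  ext; simp

theorem map_algebraMap_op (q : Matrix m m R) :
    q.map (algebraMap R Aᵐᵒᵖ) = (q.map (algebraMap R A)).map op := rfl

variable [Fintype m]

theorem transpose_map_algebraMap_mul (q : Matrix m m R) (M : Matrix m m A) :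
    (q.map (algebraMap R A) * M)ᵀ = Mᵀ * (q.map (algebraMap R A))ᵀ :=
  transpose_mul_of_commute _ _ fun _ _ _ _ => Algebra.commute_algebraMap_left _ _

theorem map_algebraMap_mul_map (S : A →ₗ[R] B) (q : Matrix m m R) (M : Matrix m m A) :
    (q.map (algebraMap R A) * M).map S = q.map (algebraMap R B) * M.map S := by
  ext i j
  simp [mul_apply, ← Algebra.smul_def]

theorem map_op_mul_map_op (M N : Matrix m m A) : M.map op * N.map op = (Nᵀ * Mᵀ)ᵀ.map op := by
  ext i j
  simp [mul_apply]

theorem map_includeLeft_mul_map_includeRight_apply (X : Matrix m m A) (Y : Matrix m m B)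
    (i c : m) :
    (X.map (Algebra.TensorProduct.includeLeft : A →ₐ[R] A ⊗[R] B) *
      Y.map Algebra.TensorProduct.includeRight : Matrix m m (A ⊗[R] B)) i c
      = ∑ j, X i j ⊗ₜ[R] Y j c := by
  simp [mul_apply]

theorem map_includeLeft_mul_map_algebraMap_mul_map_includeRight_apply (X : Matrix m m A)
    (Y : Matrix m m B) (q : Matrix m m R) (i c : m) :
    (X.map (Algebra.TensorProduct.includeLeft : A →ₐ[R] A ⊗[R] B) *
      q.map (algebraMap R (A ⊗[R] B)) * Y.map Algebra.TensorProduct.includeRight :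
        Matrix m m (A ⊗[R] B)) i c
      = ∑ j, ∑ l, q j l • (X i j ⊗ₜ[R] Y l c) := by
  rw [Matrix.mul_assoc, ← map_algebraMap_map q Algebra.TensorProduct.includeRight,
    ← Matrix.map_mul, map_includeLeft_mul_map_includeRight_apply]
  simp [mul_apply, ← Algebra.smul_def, tmul_sum]

variable [DecidableEq m] {q p : Matrix m m R}

theorem map_algebraMap_mul_map_algebraMap (h : q * p = 1) :
    q.map (algebraMap R A) * p.map (algebraMap R A) = 1 := by
  rw [← Matrix.map_mul, h, Matrix.map_one _ (_root_.map_zero _) (_root_.map_one _)]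

theorem transpose_map_algebraMap_mul_transpose_map_algebraMap (h : p * q = 1) :
    (q.map (algebraMap R A))ᵀ * (p.map (algebraMap R A))ᵀ = 1 := by
  rw [← transpose_map, ← transpose_map, map_algebraMap_mul_map_algebraMap
    (by rw [← transpose_mul, h, transpose_one])]

end AlgebraMap

end Matrix

section PivotalPair

variable {m : Type*} [Fintype m] [DecidableEq m] {R : Type*} [CommSemiring R]
  {A B : Type*} [Semiring A] [Algebra R A] [Semiring B] [Algebra R B]

/-- The defining relations of `MatrixHopf` in matrix form, for candidate images `F`, `E` of the
generators `fᵢⱼ`, `eᵢⱼ`. -/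
structure IsPivotalPair (q p : Matrix m m R) (F E : Matrix m m A) : Prop where
  transpose_mul : Fᵀ * E = (p.map (algebraMap R A))ᵀ
  mul_transpose : F * Eᵀ = p.map (algebraMap R A)
  transpose_mul_mul : Eᵀ * q.map (algebraMap R A) * F = 1
  mul_mul_transpose : E * (q.map (algebraMap R A))ᵀ * Fᵀ = 1

variable {q p : Matrix m m R}

theorem isPivotalPair_iff {F E : Matrix m m A} :
    IsPivotalPair q p F E ↔
      (∀ i c, ∑ j, F j c * E j i = algebraMap R A (p i c)) ∧
      (∀ i c, ∑ j, F i j * E c j = algebraMap R A (p i c)) ∧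
      (∀ i c, ∑ j, ∑ l, q j l • (E j i * F l c) = if i = c then 1 else 0) ∧
      (∀ i c, ∑ j, ∑ l, q l j • (E i j * F c l) = if i = c then 1 else 0) := by
  have h₃ (i c : m) :
      (Eᵀ * q.map (algebraMap R A) * F) i c = ∑ j, ∑ l, q j l • (E j i * F l c) := by
    simp only [Matrix.mul_apply, Matrix.transpose_apply, Matrix.map_apply, Finset.sum_mul,
      Algebra.smul_def]
    rw [Finset.sum_comm]
    simp only [← Algebra.commutes, mul_assoc]
  have h₄ (i c : m) :
      (E * (q.map (algebraMap R A))ᵀ * Fᵀ) i c = ∑ j, ∑ l, q l j • (E i j * F c l) := by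
    simp only [Matrix.mul_apply, Matrix.transpose_apply, Matrix.map_apply, Finset.sum_mul,
      Algebra.smul_def]
    rw [Finset.sum_comm]
    simp only [← Algebra.commutes, mul_assoc]
  constructor
  · intro h
    refine ⟨fun i c => ?_, fun i c => ?_, fun i c => ?_, fun i c => ?_⟩
    · simpa [Matrix.mul_apply] using congrFun₂ h.transpose_mul c i
    · simpa [Matrix.mul_apply] using congrFun₂ h.mul_transpose i c
    · simpa [h₃, Matrix.one_apply] using congrFun₂ h.transpose_mul_mul i c
    · simpa [h₄, Matrix.one_apply] using congrFun₂ h.mul_mul_transpose i c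
  · rintro ⟨r₁, r₂, r₃, r₄⟩
    refine ⟨Matrix.ext fun c i => ?_, Matrix.ext fun i c => ?_, Matrix.ext fun i c => ?_,
      Matrix.ext fun i c => ?_⟩
    · simpa [Matrix.mul_apply] using r₁ i c
    · simpa [Matrix.mul_apply] using r₂ i c
    · simpa [h₃, Matrix.one_apply] using r₃ i c
    · simpa [h₄, Matrix.one_apply] using r₄ i c

theorem IsPivotalPair.map {F E : Matrix m m A} (h : IsPivotalPair q p F E) (φ : A →ₐ[R] B) :
    IsPivotalPair q p (F.map φ) (E.map φ) where
  transpose_mul := by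
    simpa [Matrix.transpose_map, Function.comp_def] using congrArg (·.map φ) h.transpose_mul
  mul_transpose := by
    simpa [Matrix.transpose_map, Function.comp_def] using congrArg (·.map φ) h.mul_transpose
  transpose_mul_mul := by
    simpa [Matrix.transpose_map, Function.comp_def] using congrArg (·.map φ) h.transpose_mul_mul
  mul_mul_transpose := by
    simpa [Matrix.transpose_map, Function.comp_def] using congrArg (·.map φ) h.mul_mul_transpose

theorem isPivotalPair_self (hqp : q * p = 1) (hpq : p * q = 1) : IsPivotalPair q p p 1 where
  transpose_mul := by simp
  mul_transpose := by simp
  transpose_mul_mul := by simpa using hqp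
  mul_mul_transpose := by simpa [← Matrix.transpose_mul] using congrArg Matrix.transpose hpq

theorem IsPivotalPair.mul_of_commute {F₁ E₁ F₂ E₂ : Matrix m m A}
    (h₁ : IsPivotalPair q p F₁ E₁) (h₂ : IsPivotalPair q p F₂ E₂) (hqp : q * p = 1)
    (hpq : p * q = 1) (hF : ∀ i j k l, Commute (F₁ i j) (F₂ k l))
    (hE : ∀ i j k l, Commute (E₁ i j) (E₂ k l)) :
    IsPivotalPair q p (F₁ * q.map (algebraMap R A) * F₂) (E₁ * E₂) := by
  set Q := q.map (algebraMap R A)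
  have hFT : (F₁ * Q * F₂)ᵀ = F₂ᵀ * Qᵀ * F₁ᵀ := by
    rw [Matrix.mul_assoc, Matrix.transpose_mul_of_commute, Matrix.transpose_map_algebraMap_mul]
    exact fun i j k l => Commute.sum_right _ _ _ fun x _ =>
      (Algebra.commute_algebraMap_right _ _).mul_right (hF _ _ _ _)
  have hET : (E₁ * E₂)ᵀ = E₂ᵀ * E₁ᵀ := Matrix.transpose_mul_of_commute _ _ hE
  constructor
  · calc (F₁ * Q * F₂)ᵀ * (E₁ * E₂) = F₂ᵀ * (Qᵀ * (F₁ᵀ * E₁)) * E₂ := by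
          rw [hFT]; simp only [Matrix.mul_assoc]
      _ = F₂ᵀ * E₂ := by
          rw [h₁.transpose_mul, Matrix.transpose_map_algebraMap_mul_transpose_map_algebraMap hpq,
            Matrix.mul_one]
      _ = _ := h₂.transpose_mul
  · calc F₁ * Q * F₂ * (E₁ * E₂)ᵀ = F₁ * (Q * (F₂ * E₂ᵀ)) * E₁ᵀ := by
          rw [hET]; simp only [Matrix.mul_assoc]
      _ = F₁ * E₁ᵀ := by
          rw [h₂.mul_transpose, Matrix.map_algebraMap_mul_map_algebraMap hqp, Matrix.mul_one]
      _ = _ := h₁.mul_transpose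
  · calc (E₁ * E₂)ᵀ * Q * (F₁ * Q * F₂) = E₂ᵀ * (E₁ᵀ * Q * F₁) * Q * F₂ := by
          rw [hET]; simp only [Matrix.mul_assoc]
      _ = 1 := by rw [h₁.transpose_mul_mul, Matrix.mul_one, h₂.transpose_mul_mul]
  · calc E₁ * E₂ * Qᵀ * (F₁ * Q * F₂)ᵀ = E₁ * (E₂ * Qᵀ * F₂ᵀ) * Qᵀ * F₁ᵀ := by
          rw [hFT]; simp only [Matrix.mul_assoc]
      _ = 1 := by rw [h₂.mul_mul_transpose, Matrix.mul_one, h₁.mul_mul_transpose]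

theorem IsPivotalPair.tmul {F E : Matrix m m A} {F' E' : Matrix m m B}
    (h : IsPivotalPair q p F E) (h' : IsPivotalPair q p F' E') (hqp : q * p = 1)
    (hpq : p * q = 1) :
    IsPivotalPair q p
      (F.map (Algebra.TensorProduct.includeLeft : A →ₐ[R] A ⊗[R] B) *
        q.map (algebraMap R (A ⊗[R] B)) * F'.map Algebra.TensorProduct.includeRight)
      (E.map (Algebra.TensorProduct.includeLeft : A →ₐ[R] A ⊗[R] B) *
        E'.map Algebra.TensorProduct.includeRight) :=
  (h.map _).mul_of_commute (h'.map _) hqp hpq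
    (fun _ _ _ _ => (Commute.one_right _).tmul (Commute.one_left _))
    (fun _ _ _ _ => (Commute.one_right _).tmul (Commute.one_left _))

theorem IsPivotalPair.map_op {F E : Matrix m m A}
    (h₁ : Eᵀ * F = p.map (algebraMap R A)) (h₂ : E * Fᵀ = (p.map (algebraMap R A))ᵀ)
    (h₃ : Fᵀ * (q.map (algebraMap R A))ᵀ * E = 1) (h₄ : F * q.map (algebraMap R A) * Eᵀ = 1) :
    IsPivotalPair q p (F.map MulOpposite.op) (E.map MulOpposite.op) where
  transpose_mul := by
    rw [← Matrix.transpose_map, Matrix.map_op_mul_map_op, Matrix.transpose_transpose, h₁,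
      Matrix.map_algebraMap_op, Matrix.transpose_map]
  mul_transpose := by
    rw [← Matrix.transpose_map, Matrix.map_op_mul_map_op, Matrix.transpose_transpose, h₂,
      Matrix.transpose_transpose, Matrix.map_algebraMap_op]
  transpose_mul_mul := by
    rw [← Matrix.transpose_map, Matrix.map_algebraMap_op, Matrix.map_op_mul_map_op,
      Matrix.map_op_mul_map_op]
    simp only [Matrix.transpose_transpose]
    rw [← Matrix.mul_assoc, h₃, Matrix.transpose_one, Matrix.map_one _ rfl rfl]
  mul_mul_transpose := by
    rw [Matrix.map_algebraMap_op, ← Matrix.transpose_map (f := MulOpposite.op) (M := q.map _),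
      ← Matrix.transpose_map (f := MulOpposite.op) (M := F), Matrix.map_op_mul_map_op,
      Matrix.map_op_mul_map_op]
    simp only [Matrix.transpose_transpose]
    rw [← Matrix.mul_assoc, h₄, Matrix.transpose_one, Matrix.map_one _ rfl rfl]

/-- Here `Qᵀ Fᵀ` and `Q F` are the inverses of `E` and `Eᵀ`, which is what the relations
in `Aᵐᵒᵖ` amount to. -/
theorem IsPivotalPair.dual {F E : Matrix m m A} (h : IsPivotalPair q p F E)
    (hqp : q * p = 1) (hpq : p * q = 1) :
    IsPivotalPair q p ((p.map (algebraMap R A) * Eᵀ).map MulOpposite.op)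
      (((q.map (algebraMap R A))ᵀ * Fᵀ).map MulOpposite.op) := by
  set P := p.map (algebraMap R A)
  set Q := q.map (algebraMap R A)
  have hPE : (P * Eᵀ)ᵀ = E * Pᵀ := by
    rw [Matrix.transpose_map_algebraMap_mul, Matrix.transpose_transpose]
  have hQF : (Qᵀ * Fᵀ)ᵀ = F * Q := by
    rw [Matrix.transpose_mul_of_commute Qᵀ Fᵀ fun _ _ _ _ => Algebra.commute_algebraMap_left _ _,
      Matrix.transpose_transpose, Matrix.transpose_transpose]
  apply IsPivotalPair.map_op
  · calc (Qᵀ * Fᵀ)ᵀ * (P * Eᵀ) = F * (Q * P) * Eᵀ := by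
          rw [hQF]; simp only [Matrix.mul_assoc]
      _ = P := by rw [Matrix.map_algebraMap_mul_map_algebraMap hqp, Matrix.mul_one, h.mul_transpose]
  · calc Qᵀ * Fᵀ * (P * Eᵀ)ᵀ = Qᵀ * (Fᵀ * E) * Pᵀ := by
          rw [hPE]; simp only [Matrix.mul_assoc]
      _ = Pᵀ := by
          rw [h.transpose_mul, Matrix.transpose_map_algebraMap_mul_transpose_map_algebraMap hpq,
            Matrix.one_mul]
  · calc (P * Eᵀ)ᵀ * Qᵀ * (Qᵀ * Fᵀ) = E * (Pᵀ * Qᵀ) * Qᵀ * Fᵀ := by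
          rw [hPE]; simp only [Matrix.mul_assoc]
      _ = 1 := by
          rw [Matrix.transpose_map_algebraMap_mul_transpose_map_algebraMap hqp, Matrix.mul_one,
            h.mul_mul_transpose]
  · calc P * Eᵀ * Q * (Qᵀ * Fᵀ)ᵀ = P * (Eᵀ * Q * F) * Q := by
          rw [hQF]; simp only [Matrix.mul_assoc]
      _ = 1 := by
          rw [h.transpose_mul_mul, Matrix.mul_one, Matrix.map_algebraMap_mul_map_algebraMap hpq]

theorem IsPivotalPair.transpose_map_algebraMap_mul_transpose_mul {F E : Matrix m m A}
    (h : IsPivotalPair q p F E) (hpq : p * q = 1) : (q.map (algebraMap R A))ᵀ * Fᵀ * E = 1 := by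
  rw [Matrix.mul_assoc, h.transpose_mul,
    Matrix.transpose_map_algebraMap_mul_transpose_map_algebraMap hpq]

theorem IsPivotalPair.map_algebraMap_mul_mul_transpose {F E : Matrix m m A}
    (h : IsPivotalPair q p F E) (hqp : q * p = 1) : q.map (algebraMap R A) * F * Eᵀ = 1 := by
  rw [Matrix.mul_assoc, h.mul_transpose, Matrix.map_algebraMap_mul_map_algebraMap hqp]

end PivotalPair

section AntipodeOnGenerators

open Coalgebra

variable {R A : Type*} [CommSemiring R] [Semiring A] [Bialgebra R A] {S : A →ₗ[R] A}
  (hS : ∀ a b, S (a * b) = S b * S a)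
include hS

theorem mul'_rTensor_mul_tmul (t : A ⊗[R] A) (c d : A) :
    LinearMap.mul' R A (S.rTensor A (t * c ⊗ₜ d))
      = S c * LinearMap.mul' R A (S.rTensor A t) * d := by
  induction t using TensorProduct.induction_on with
  | zero => simp
  | tmul a b => simp [hS, mul_assoc]
  | add u v hu hv => simp only [add_mul, map_add, hu, hv, mul_add]

theorem mul'_lTensor_tmul_mul (t : A ⊗[R] A) (c d : A) :
    LinearMap.mul' R A (S.lTensor A (c ⊗ₜ d * t))
      = c * LinearMap.mul' R A (S.lTensor A t) * S d := by
  induction t using TensorProduct.induction_on with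
  | zero => simp
  | tmul a b => simp [hS, mul_assoc]
  | add u v hu hv => simp only [mul_add, map_add, hu, hv, add_mul]

variable (hS₁ : S 1 = 1) {s : Set A} (hs : Algebra.adjoin R s = ⊤)
include hS₁ hs

theorem mul_antipode_rTensor_comul_of_adjoin_eq_top
    (h : ∀ a ∈ s, LinearMap.mul' R A (S.rTensor A (comul a)) = algebraMap R A (counit a)) :
    LinearMap.mul' R A ∘ₗ S.rTensor A ∘ₗ comul = Algebra.linearMap R A ∘ₗ counit := by
  refine LinearMap.ext fun a => ?_
  simp only [LinearMap.comp_apply, Algebra.linearMap_apply]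
  induction (hs ▸ Algebra.mem_top : a ∈ Algebra.adjoin R s) using Algebra.adjoin_induction with
  | mem x hx => exact h x hx
  | algebraMap r => simp [Algebra.algebraMap_eq_smul_one, Algebra.TensorProduct.one_def, hS₁]
  | add x y _ _ hx hy => simp only [map_add, hx, hy]
  | mul x y _ _ hx hy =>
    have hxu (u : A ⊗[R] A) : LinearMap.mul' R A (S.rTensor A (comul x * u))
        = counit (R := R) x • LinearMap.mul' R A (S.rTensor A u) := by
      induction u using TensorProduct.induction_on with
      | zero => simp
      | tmul c d => simp [mul'_rTensor_mul_tmul hS, hx, Algebra.smul_def, ← Algebra.commutes,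
          mul_assoc]
      | add u v hu hv => simp only [mul_add, map_add, hu, hv, smul_add]
    rw [Bialgebra.comul_mul, hxu, hy, Bialgebra.counit_mul, map_mul, Algebra.smul_def]

theorem mul_antipode_lTensor_comul_of_adjoin_eq_top
    (h : ∀ a ∈ s, LinearMap.mul' R A (S.lTensor A (comul a)) = algebraMap R A (counit a)) :
    LinearMap.mul' R A ∘ₗ S.lTensor A ∘ₗ comul = Algebra.linearMap R A ∘ₗ counit := by
  refine LinearMap.ext fun a => ?_
  simp only [LinearMap.comp_apply, Algebra.linearMap_apply]
  induction (hs ▸ Algebra.mem_top : a ∈ Algebra.adjoin R s) using Algebra.adjoin_induction with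
  | mem x hx => exact h x hx
  | algebraMap r => simp [Algebra.algebraMap_eq_smul_one, Algebra.TensorProduct.one_def, hS₁]
  | add x y _ _ hx hy => simp only [map_add, hx, hy]
  | mul x y _ _ hx hy =>
    have hyu (u : A ⊗[R] A) : LinearMap.mul' R A (S.lTensor A (u * comul y))
        = counit (R := R) y • LinearMap.mul' R A (S.lTensor A u) := by
      induction u using TensorProduct.induction_on with
      | zero => simp
      | tmul c d => simp [mul'_lTensor_tmul_mul hS, hy, Algebra.smul_def, Algebra.commutes,
          mul_assoc]
      | add u v hu hv => simp only [add_mul, map_add, hu, hv, smul_add]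
    rw [Bialgebra.comul_mul, hyu, hx, Bialgebra.counit_mul, mul_comm, map_mul, Algebra.smul_def]

abbrev HopfAlgebra.ofAdjoinEqTop
    (hr : ∀ a ∈ s, LinearMap.mul' R A (S.rTensor A (comul a)) = algebraMap R A (counit a))
    (hl : ∀ a ∈ s, LinearMap.mul' R A (S.lTensor A (comul a)) = algebraMap R A (counit a)) :
    HopfAlgebra R A :=
  { toHopfAlgebraStruct := { antipode := S }
    mul_antipode_rTensor_comul := mul_antipode_rTensor_comul_of_adjoin_eq_top hS hS₁ hs hr
    mul_antipode_lTensor_comul := mul_antipode_lTensor_comul_of_adjoin_eq_top hS hS₁ hs hl }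

end AntipodeOnGenerators

section MultiplicativeMatrix

open Coalgebra TensorProduct

variable {R A : Type*} [CommSemiring R] [Semiring A] {m : Type*} [Fintype m]

section AlgHom

variable [Algebra R A] (Δ : A →ₐ[R] A ⊗[R] A) {X : Matrix m m A}
  (hX : ∀ i c, Δ (X i c) = ∑ j, X i j ⊗ₜ[R] X j c)
include hX

theorem assoc_map_comul_apply_of_comul_eq_sum (i c : m) :
    Algebra.TensorProduct.assoc R R R A A A (Algebra.TensorProduct.map Δ (.id R A) (Δ (X i c)))
      = Algebra.TensorProduct.map (.id R A) Δ (Δ (X i c)) := by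
  simp only [hX, map_sum, Algebra.TensorProduct.map_tmul, AlgHom.id_apply,
    Algebra.TensorProduct.assoc_tmul, sum_tmul, tmul_sum]
  exact Finset.sum_comm

variable [DecidableEq m] {ε : A →ₐ[R] R} (hε : ∀ i c, ε (X i c) = (1 : Matrix m m R) i c)
include hε

theorem map_counit_id_comul_apply_of_comul_eq_sum (i c : m) :
    Algebra.TensorProduct.map ε (.id R A) (Δ (X i c)) = 1 ⊗ₜ X i c := by
  simp [hX, hε, Matrix.one_apply, ite_tmul]

theorem map_id_counit_comul_apply_of_comul_eq_sum (i c : m) :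
    Algebra.TensorProduct.map (.id R A) ε (Δ (X i c)) = X i c ⊗ₜ 1 := by
  simp [hX, hε, Matrix.one_apply, tmul_ite]

end AlgHom

variable [DecidableEq m] [Bialgebra R A] {X : Matrix m m A}
  (hX : ∀ i c, comul (R := R) (X i c) = ∑ j, X i j ⊗ₜ[R] X j c)
  (hε : ∀ i c, counit (X i c) = (1 : Matrix m m R) i c) {S : A →ₗ[R] A}
include hX hε

theorem mul'_rTensor_comul_of_map_mul_eq_one (hS : X.map S * X = 1) (i c : m) :
    LinearMap.mul' R A (S.rTensor A (comul (X i c))) = algebraMap R A (counit (X i c)) := by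
  simpa [hX, hε, Matrix.mul_apply, Matrix.one_apply, apply_ite (algebraMap R A)]
    using congrFun₂ hS i c

theorem mul'_lTensor_comul_of_mul_map_eq_one (hS : X * X.map S = 1) (i c : m) :
    LinearMap.mul' R A (S.lTensor A (comul (X i c))) = algebraMap R A (counit (X i c)) := by
  simpa [hX, hε, Matrix.mul_apply, Matrix.one_apply, apply_ite (algebraMap R A)]
    using congrFun₂ hS i c

end MultiplicativeMatrix

namespace MatrixHopf

open TensorProduct

variable {k n} {q p : Matrix (Fin n) (Fin n) k}

variable (q p) in
def fMatrix : Matrix (Fin n) (Fin n) (MatrixHopf k n q p) := Matrix.of (F' k n q p)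

variable (q p) in
def eMatrix : Matrix (Fin n) (Fin n) (MatrixHopf k n q p) := Matrix.of (E' k n q p)

theorem isPivotalPair_generators : IsPivotalPair q p (fMatrix q p) (eMatrix q p) := by
  -- each relation is stated in `RingQuot`, whose instances match those of `MatrixHopf` only up
  -- to unfolding, hence `exact` rather than `simpa`
  refine isPivotalPair_iff.2 ⟨fun i c => ?_, fun i c => ?_, fun i c => ?_, fun i c => ?_⟩
  · have := RingQuot.mkAlgHom_rel k (MatrixRel.left_pair (q := q) (p := p) i c)
    simp [fMatrix, eMatrix, F', E'] at this ⊢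
    exact this
  · have := RingQuot.mkAlgHom_rel k (MatrixRel.right_pair (q := q) (p := p) i c)
    simp [fMatrix, eMatrix, F', E'] at this ⊢
    exact this
  · have := RingQuot.mkAlgHom_rel k (MatrixRel.left_copair (q := q) (p := p) i c)
    by_cases hic : i = c <;> simp [fMatrix, eMatrix, F', E', hic] at this ⊢ <;> exact this
  · have := RingQuot.mkAlgHom_rel k (MatrixRel.right_copair (q := q) (p := p) i c)
    by_cases hic : i = c <;> simp [fMatrix, eMatrix, F', E', hic] at this ⊢ <;> exact this

variable {B : Type*} [Semiring B] [Algebra k B] {F E : Matrix (Fin n) (Fin n) B}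

def lift (h : IsPivotalPair q p F E) : MatrixHopf k n q p →ₐ[k] B :=
  RingQuot.liftAlgHom k ⟨FreeAlgebra.lift k (Sum.elim (fun x => F x.1 x.2) (fun x => E x.1 x.2)),
    by
      obtain ⟨h₁, h₂, h₃, h₄⟩ := isPivotalPair_iff.1 h
      rintro _ _ (⟨i, c⟩ | ⟨i, c⟩ | ⟨i, c⟩ | ⟨i, c⟩) <;> by_cases hic : i = c <;>
        simp [fg, eg, h₁, h₂, h₃, h₄, hic]⟩

theorem map_lift_fMatrix (h : IsPivotalPair q p F E) : (fMatrix q p).map (lift h) = F := by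
  ext i j
  exact (RingQuot.liftAlgHom_mkAlgHom_apply k _ _ _).trans (FreeAlgebra.lift_ι_apply _ _)

theorem map_lift_eMatrix (h : IsPivotalPair q p F E) : (eMatrix q p).map (lift h) = E := by
  ext i j
  exact (RingQuot.liftAlgHom_mkAlgHom_apply k _ _ _).trans (FreeAlgebra.lift_ι_apply _ _)

variable (hqp : q * p = 1) (hpq : p * q = 1)

local notation "𝔸" => MatrixHopf k n q p

def comul : 𝔸 →ₐ[k] 𝔸 ⊗[k] 𝔸 :=
  lift (isPivotalPair_generators.tmul isPivotalPair_generators hqp hpq)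

def counit : 𝔸 →ₐ[k] k := lift (isPivotalPair_self hqp hpq)

def antipode : 𝔸 →ₗ[k] 𝔸 :=
  (MulOpposite.opLinearEquiv k).symm.toLinearMap ∘ₗ
    (lift (isPivotalPair_generators.dual hqp hpq)).toLinearMap

variable (q p) in
/-- `G = Q F`; unlike `F`, it is multiplicative: `Δ Gᵢₖ = Σⱼ Gᵢⱼ ⊗ Gⱼₖ`. -/
def gMatrix : Matrix (Fin n) (Fin n) 𝔸 := q.map (algebraMap k 𝔸) * fMatrix q p

variable (q p) in
def generators : Set 𝔸 := {x | ∃ i j, eMatrix q p i j = x ∨ gMatrix q p i j = x}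

include hpq in
theorem adjoin_generators : Algebra.adjoin k (generators q p) = ⊤ := by
  have hF : ∀ i j, fMatrix q p i j ∈ Algebra.adjoin k (generators q p) := by
    intro i j
    have : fMatrix q p = p.map (algebraMap k 𝔸) * gMatrix q p := by
      rw [gMatrix, ← Matrix.mul_assoc, Matrix.map_algebraMap_mul_map_algebraMap hpq,
        Matrix.one_mul]
    rw [this, Matrix.mul_apply]
    exact Subalgebra.sum_mem _ fun l _ => Subalgebra.mul_mem _ (Subalgebra.algebraMap_mem _ _)
      (Algebra.subset_adjoin ⟨l, j, .inr rfl⟩)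
  rw [eq_top_iff]
  rintro x -
  obtain ⟨x, rfl⟩ := RingQuot.mkAlgHom_surjective k (MatrixRel k n q p) x
  induction x using FreeAlgebra.induction with
  | grade0 r => rw [AlgHom.commutes]; exact Subalgebra.algebraMap_mem _ r
  | grade1 g =>
    rcases g with ⟨i, j⟩ | ⟨i, j⟩
    exacts [hF i j, Algebra.subset_adjoin ⟨i, j, .inl rfl⟩]
  | mul a b ha hb => rw [map_mul]; exact Subalgebra.mul_mem _ ha hb
  | add a b ha hb => rw [map_add]; exact Subalgebra.add_mem _ ha hb

local notation "incL" => (Algebra.TensorProduct.includeLeft : 𝔸 →ₐ[k] 𝔸 ⊗[k] 𝔸)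
local notation "incR" => (Algebra.TensorProduct.includeRight : 𝔸 →ₐ[k] 𝔸 ⊗[k] 𝔸)

theorem map_comul_fMatrix : (fMatrix q p).map (comul hqp hpq)
    = (fMatrix q p).map incL * q.map (algebraMap k (𝔸 ⊗[k] 𝔸)) * (fMatrix q p).map incR :=
  map_lift_fMatrix _

theorem comul_eMatrix (i c : Fin n) :
    comul hqp hpq (eMatrix q p i c) = ∑ j, eMatrix q p i j ⊗ₜ eMatrix q p j c :=
  (congrFun₂ (map_lift_eMatrix _) i c).trans
    (Matrix.map_includeLeft_mul_map_includeRight_apply ..)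

theorem comul_fMatrix (i c : Fin n) :
    comul hqp hpq (fMatrix q p i c) = ∑ j, ∑ l, q j l • (fMatrix q p i j ⊗ₜ fMatrix q p l c) :=
  (congrFun₂ (map_comul_fMatrix hqp hpq) i c).trans
    (Matrix.map_includeLeft_mul_map_algebraMap_mul_map_includeRight_apply ..)

theorem comul_gMatrix (i c : Fin n) :
    comul hqp hpq (gMatrix q p i c) = ∑ j, gMatrix q p i j ⊗ₜ gMatrix q p j c := by
  have : (gMatrix q p).map (comul hqp hpq)
      = (gMatrix q p).map incL * (gMatrix q p).map incR := by
    simp only [gMatrix, Matrix.map_mul, map_comul_fMatrix, Matrix.map_algebraMap_map,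
      Matrix.mul_assoc]
  exact (congrFun₂ this i c).trans (Matrix.map_includeLeft_mul_map_includeRight_apply ..)

theorem counit_eMatrix (i c : Fin n) :
    counit hqp hpq (eMatrix q p i c) = (1 : Matrix _ _ k) i c :=
  congrFun₂ (map_lift_eMatrix _) i c

theorem counit_fMatrix (i c : Fin n) : counit hqp hpq (fMatrix q p i c) = p i c :=
  congrFun₂ (map_lift_fMatrix _) i c

theorem counit_gMatrix (i c : Fin n) :
    counit hqp hpq (gMatrix q p i c) = (1 : Matrix _ _ k) i c := by
  have : (gMatrix q p).map (counit hqp hpq) = 1 := by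
    rw [gMatrix, Matrix.map_mul, Matrix.map_algebraMap_map, counit, map_lift_fMatrix]
    simpa using hqp
  exact congrFun₂ this i c

theorem map_antipode_eMatrix :
    (eMatrix q p).map (antipode hqp hpq) = (q.map (algebraMap k 𝔸))ᵀ * (fMatrix q p)ᵀ := by
  ext i j
  exact congrArg MulOpposite.unop (congrFun₂ (map_lift_eMatrix _) i j)

theorem map_antipode_fMatrix :
    (fMatrix q p).map (antipode hqp hpq) = p.map (algebraMap k 𝔸) * (eMatrix q p)ᵀ := by
  ext i j
  exact congrArg MulOpposite.unop (congrFun₂ (map_lift_fMatrix _) i j)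

theorem antipode_eMatrix (i c : Fin n) :
    antipode hqp hpq (eMatrix q p i c) = ∑ l, q l i • fMatrix q p c l :=
  (congrFun₂ (map_antipode_eMatrix hqp hpq) i c).trans <| by
    simp [Matrix.mul_apply, Algebra.smul_def]

theorem antipode_fMatrix (i c : Fin n) :
    antipode hqp hpq (fMatrix q p i c) = ∑ l, p i l • eMatrix q p c l :=
  (congrFun₂ (map_antipode_fMatrix hqp hpq) i c).trans <| by
    simp [Matrix.mul_apply, Algebra.smul_def]

theorem map_antipode_gMatrix : (gMatrix q p).map (antipode hqp hpq) = (eMatrix q p)ᵀ := by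
  rw [gMatrix, Matrix.map_algebraMap_mul_map, map_antipode_fMatrix, ← Matrix.mul_assoc,
    Matrix.map_algebraMap_mul_map_algebraMap hqp, Matrix.one_mul]

theorem antipode_one : antipode hqp hpq 1 = 1 := by
  simp [antipode]

theorem antipode_mul (a b : 𝔸) :
    antipode hqp hpq (a * b) = antipode hqp hpq b * antipode hqp hpq a := by
  simp [antipode]

abbrev bialgebra : Bialgebra k 𝔸 :=
  Bialgebra.ofAlgHom (comul hqp hpq) (counit hqp hpq)
    (AlgHom.ext_of_adjoin_eq_top (adjoin_generators hpq) <| by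
      rintro _ ⟨i, c, rfl | rfl⟩
      · exact assoc_map_comul_apply_of_comul_eq_sum _ (comul_eMatrix hqp hpq) i c
      · exact assoc_map_comul_apply_of_comul_eq_sum _ (comul_gMatrix hqp hpq) i c)
    (AlgHom.ext_of_adjoin_eq_top (adjoin_generators hpq) <| by
      rintro _ ⟨i, c, rfl | rfl⟩
      · exact map_counit_id_comul_apply_of_comul_eq_sum _ (comul_eMatrix hqp hpq)
          (counit_eMatrix hqp hpq) i c
      · exact map_counit_id_comul_apply_of_comul_eq_sum _ (comul_gMatrix hqp hpq)
          (counit_gMatrix hqp hpq) i c)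
    (AlgHom.ext_of_adjoin_eq_top (adjoin_generators hpq) <| by
      rintro _ ⟨i, c, rfl | rfl⟩
      · exact map_id_counit_comul_apply_of_comul_eq_sum _ (comul_eMatrix hqp hpq)
          (counit_eMatrix hqp hpq) i c
      · exact map_id_counit_comul_apply_of_comul_eq_sum _ (comul_gMatrix hqp hpq)
          (counit_gMatrix hqp hpq) i c)

theorem map_antipode_eMatrix_mul : (eMatrix q p).map (antipode hqp hpq) * eMatrix q p = 1 := by
  rw [map_antipode_eMatrix,
    isPivotalPair_generators.transpose_map_algebraMap_mul_transpose_mul hpq]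

theorem eMatrix_mul_map_antipode : eMatrix q p * (eMatrix q p).map (antipode hqp hpq) = 1 := by
  rw [map_antipode_eMatrix, ← Matrix.mul_assoc, isPivotalPair_generators.mul_mul_transpose]

theorem map_antipode_gMatrix_mul : (gMatrix q p).map (antipode hqp hpq) * gMatrix q p = 1 := by
  rw [map_antipode_gMatrix, gMatrix, ← Matrix.mul_assoc,
    isPivotalPair_generators.transpose_mul_mul]

theorem gMatrix_mul_map_antipode : gMatrix q p * (gMatrix q p).map (antipode hqp hpq) = 1 := by
  rw [map_antipode_gMatrix, gMatrix,
    isPivotalPair_generators.map_algebraMap_mul_mul_transpose hqp]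

abbrev hopfAlgebra : HopfAlgebra k 𝔸 :=
  letI := bialgebra hqp hpq
  HopfAlgebra.ofAdjoinEqTop (antipode_mul hqp hpq) (antipode_one hqp hpq)
    (adjoin_generators hpq)
    (by
      rintro _ ⟨i, c, rfl | rfl⟩
      · exact mul'_rTensor_comul_of_map_mul_eq_one (comul_eMatrix hqp hpq)
          (counit_eMatrix hqp hpq) (map_antipode_eMatrix_mul hqp hpq) i c
      · exact mul'_rTensor_comul_of_map_mul_eq_one (comul_gMatrix hqp hpq)
          (counit_gMatrix hqp hpq) (map_antipode_gMatrix_mul hqp hpq) i c)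
    (by
      rintro _ ⟨i, c, rfl | rfl⟩
      · exact mul'_lTensor_comul_of_mul_map_eq_one (comul_eMatrix hqp hpq)
          (counit_eMatrix hqp hpq) (eMatrix_mul_map_antipode hqp hpq) i c
      · exact mul'_lTensor_comul_of_mul_map_eq_one (comul_gMatrix hqp hpq)
          (counit_gMatrix hqp hpq) (gMatrix_mul_map_antipode hqp hpq) i c)

end MatrixHopf

/-- Example 5.10: for an invertible matrix `q ∈ GL(n,k)` with inverse `p`, the quotient of
the free algebra `k⟨fᵢⱼ, eᵢⱼ⟩` by the relations
`Σⱼ fⱼₖeⱼᵢ = Σⱼ fᵢⱼeₖⱼ = pᵢₖ`, `Σ_{j,l} eⱼᵢf_{lk}q_{jl} = Σ_{j,l} eᵢⱼf_{kl}q_{lj} = δᵢₖ`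
is a Hopf algebra with coproduct `Δ(eᵢₖ) = Σⱼ eᵢⱼ ⊗ eⱼₖ`,
`Δ(fᵢₖ) = Σ_{j,l} fᵢⱼ ⊗ f_{lk} q_{jl}`, counit `ε(eᵢₖ) = δᵢₖ`, `ε(fᵢₖ) = pᵢₖ`, and
antipode `S(eᵢₖ) = Σ_l f_{kl} q_{li}`, `S(fᵢₖ) = Σ_l eₖₗ p_{il}`. -/
theorem matrixHopf_isHopfAlgebra (q p : Matrix (Fin n) (Fin n) k)
    (hqp : q * p = 1) (hpq : p * q = 1) :
    ∃ (Δ : MatrixHopf k n q p →ₗ[k] (MatrixHopf k n q p ⊗[k] MatrixHopf k n q p))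
      (ct : MatrixHopf k n q p →ₗ[k] k) (S : MatrixHopf k n q p →ₗ[k] MatrixHopf k n q p)
      (inst : HopfAlgebra k (MatrixHopf k n q p)),
      -- the Hopf algebra structure extends the quotient algebra structure,
      -- with comultiplication `Δ`, counit `ct` and antipode `S`
      inst.toBialgebra.toAlgebra = (inferInstance : Algebra k (MatrixHopf k n q p)) ∧
      HEq (@CoalgebraStruct.comul k (MatrixHopf k n q p) _ _ _
        inst.toBialgebra.toCoalgebra.toCoalgebraStruct) Δ ∧
      HEq (@CoalgebraStruct.counit k (MatrixHopf k n q p) _ _ _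
        inst.toBialgebra.toCoalgebra.toCoalgebraStruct) ct ∧
      HEq inst.antipode S ∧
      -- `Δ(eᵢₖ) = Σⱼ eᵢⱼ ⊗ eⱼₖ`, `Δ(fᵢₖ) = Σ_{j,l} fᵢⱼ ⊗ f_{lk} q_{jl}`
      (∀ i c : Fin n, Δ (E' k n q p i c) = ∑ j, E' k n q p i j ⊗ₜ[k] E' k n q p j c) ∧
      (∀ i c : Fin n,
        Δ (F' k n q p i c) = ∑ j, ∑ l, q j l • (F' k n q p i j ⊗ₜ[k] F' k n q p l c)) ∧
      -- `ε(eᵢₖ) = δᵢₖ`, `ε(fᵢₖ) = pᵢₖ`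
      (∀ i c : Fin n, ct (E' k n q p i c) = (if i = c then 1 else 0)) ∧
      (∀ i c : Fin n, ct (F' k n q p i c) = p i c) ∧
      -- `S(eᵢₖ) = Σ_l f_{kl} q_{li}`, `S(fᵢₖ) = Σ_l eₖₗ pᵢₗ`
      (∀ i c : Fin n, S (E' k n q p i c) = ∑ l, q l i • F' k n q p c l) ∧
      (∀ i c : Fin n, S (F' k n q p i c) = ∑ l, p i l • E' k n q p c l) :=
  ⟨(MatrixHopf.comul hqp hpq).toLinearMap, (MatrixHopf.counit hqp hpq).toLinearMap,
    MatrixHopf.antipode hqp hpq, MatrixHopf.hopfAlgebra hqp hpq, rfl, .rfl, .rfl, .rfl,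
    MatrixHopf.comul_eMatrix hqp hpq, MatrixHopf.comul_fMatrix hqp hpq,
    MatrixHopf.counit_eMatrix hqp hpq, MatrixHopf.counit_fMatrix hqp hpq,
    MatrixHopf.antipode_eMatrix hqp hpq, MatrixHopf.antipode_fMatrix hqp hpq⟩

end
end
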